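/- The sequence x̄ ∈ ([0,1]²)^ℕ constructed from the triangle data is not minimal. In fact, for every index i > 1, d̄(((0,0),(1,0),(0,1)), (x_i,x_{i+1},x_{i+2})) ≥ 1/8, where d̄ on 3-blocks is d̄((u_1,u_2,u_3),(w_1,w_2,w_3)) = Σ_{k=1}^3 d(u_k,w_k)/2^k with d the Euclidean metric on [0,1]². -/

import Mathlib

open Set unitInterval

/-- The left shift `S` on sequences: `S(x₁,x₂,x₃,…) = (x₂,x₃,…)`. -/
def shiftSeq {X : Type*} (z : ℕ → X) : ℕ → X := fun n => z (n + 1)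

/-- The closure of the forward shift-orbit `{z, Sz, S²z, …}` of a sequence `z`,
inside the sequence space `ℕ → X`.  (For a compact metric space `X` the product
topology on `ℕ → X` is exactly the topology of the metric
`d̄(x̄,ȳ) = ∑ᵢ d(xᵢ,yᵢ)/2ⁱ`.) -/
def shiftOrbitClosure {X : Type*} [TopologicalSpace X] (z : ℕ → X) : Set (ℕ → X) :=
  closure (Set.range fun k => shiftSeq^[k] z)

/-- A sequence `z` is *minimal* if the closure of its shift-orbit is a minimal
dynamical system under the shift, i.e. every point of this closure has dense
forward orbit in it. -/
def IsMinimalSeq {X : Type*} [TopologicalSpace X] (z : ℕ → X) : Prop :=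
  ∀ w ∈ shiftOrbitClosure z, shiftOrbitClosure z ⊆ shiftOrbitClosure w

/-- The 2-Toeplitz sequence of `B = (b 0, b 1, …)` (all sequences 0-indexed):
its `n`-th term is `b p` where `2 ^ p` exactly divides `n + 1`; equivalently the
term at (1-indexed) position `j` is `b_i` for all `j ≡ 2^(i-1) (mod 2^i)`. -/
def toeplitz2 {X : Type*} (b : ℕ → X) : ℕ → X :=
  fun n => b (padicValNat 2 (n + 1))

noncomputable section

/-- The plane with the Euclidean metric. -/
abbrev E2 := EuclideanSpace ℝ (Fin 2)

def p00 : E2 := WithLp.toLp 2 ![0, 0]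
def p10 : E2 := WithLp.toLp 2 ![1, 0]
def p01 : E2 := WithLp.toLp 2 ![0, 1]

/-- Flatten a sequence of triples into a sequence, each triple contributing
three consecutive terms. -/
def flattenTriples {Y : Type*} (b : ℕ → Y × Y × Y) : ℕ → Y := fun n =>
  if n % 3 = 0 then (b (n / 3)).1
  else if n % 3 = 1 then (b (n / 3)).2.1
  else (b (n / 3)).2.2

/-- The sequence `x̄ = ((0,0),(1,0),(0,1)) ∗ b̄` where `b̄` is the 2-Toeplitz
sequence associated with `v`, each triple of `b̄` contributing three consecutive
terms of `x̄`. -/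
def triSeq (v : ℕ → E2 × E2 × E2) : ℕ → E2 := fun n =>
  if n = 0 then p00 else if n = 1 then p10 else if n = 2 then p01
  else flattenTriples (toeplitz2 v) (n - 3)

/-! The initial block `(p00, p10, p01)` is isolated from every later 3-window: each later block
has a vertex replaced by a point on the opposite side of the triangle, and every window
straddling two blocks contains a vertex of the triangle in a wrong position. Hence the sequence
does not return to its own initial block, so it is not in the orbit closure of its shift. -/

theorem shiftSeq_iterate_apply {X : Type*} (z : ℕ → X) (m n : ℕ) :
    shiftSeq^[m] z n = z (m + n) := by
  induction m generalizing z with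
  | zero => simp
  | succ m ih => rw [Function.iterate_succ_apply, ih, Nat.add_right_comm]; rfl

theorem not_isMinimalSeq_of_forall_iterate_succ_mem {X : Type*} [TopologicalSpace X]
    {z : ℕ → X} {C : Set (ℕ → X)} (hC : IsClosed C) (hz : z ∉ C)
    (hshift : ∀ k, shiftSeq^[k + 1] z ∈ C) : ¬ IsMinimalSeq z := by
  intro hmin
  have hSz : shiftSeq z ∈ shiftOrbitClosure z := subset_closure ⟨1, rfl⟩
  have hSzC : shiftOrbitClosure (shiftSeq z) ⊆ C := by
    refine closure_minimal ?_ hC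
    rintro _ ⟨k, rfl⟩
    simpa only [Function.iterate_succ_apply] using hshift k
  exact hz (hSzC (hmin _ hSz (subset_closure ⟨0, rfl⟩)))

section FlattenTriples

variable {Y : Type*} (b : ℕ → Y × Y × Y) (j : ℕ)

@[simp]
theorem flattenTriples_three_mul : flattenTriples b (3 * j) = (b j).1 := by
  simp [flattenTriples]

@[simp]
theorem flattenTriples_three_mul_add_one : flattenTriples b (3 * j + 1) = (b j).2.1 := by
  simp [flattenTriples, Nat.add_mod, Nat.add_div]

@[simp]
theorem flattenTriples_three_mul_add_two : flattenTriples b (3 * j + 2) = (b j).2.2 := by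
  simp [flattenTriples, Nat.add_mod, Nat.add_div]

theorem flattenTriples_add_three :
    flattenTriples b (j + 3) = flattenTriples (fun k => b (k + 1)) j := by
  simp [flattenTriples, Nat.add_div_right]

end FlattenTriples

def triBlocks (v : ℕ → E2 × E2 × E2) : ℕ → E2 × E2 × E2
  | 0 => (p00, p10, p01)
  | j + 1 => toeplitz2 v j

theorem triSeq_eq_flattenTriples (v : ℕ → E2 × E2 × E2) :
    triSeq v = flattenTriples (triBlocks v) := by
  funext n
  match n with
  | 0 | 1 | 2 => simp [triSeq, flattenTriples, triBlocks]
  | n + 3 => rw [flattenTriples_add_three]; simp [triSeq, triBlocks]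

theorem half_le_dist_p00_of_mem_segment {a : E2} (ha : a ∈ segment ℝ p10 p01) :
    1 / 2 ≤ dist p00 a := by
  obtain ⟨u, w, -, -, huw, rfl⟩ := ha
  rw [EuclideanSpace.dist_eq, Real.le_sqrt (by norm_num) (by positivity)]
  simp [Fin.sum_univ_two, p00, p10, p01]
  nlinarith [sq_nonneg (u - w)]

theorem one_le_dist_p10_of_mem_segment {a : E2} (ha : a ∈ segment ℝ p00 p01) :
    1 ≤ dist p10 a := by
  obtain ⟨u, w, -, -, -, rfl⟩ := ha
  rw [EuclideanSpace.dist_eq, Real.le_sqrt (by norm_num) (by positivity)]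
  simp [Fin.sum_univ_two, p00, p10, p01]
  positivity

theorem one_le_dist_p01_of_mem_segment {a : E2} (ha : a ∈ segment ℝ p00 p10) :
    1 ≤ dist p01 a := by
  obtain ⟨u, w, -, -, -, rfl⟩ := ha
  rw [EuclideanSpace.dist_eq, Real.le_sqrt (by norm_num) (by positivity)]
  simp [Fin.sum_univ_two, p00, p10, p01]
  positivity

theorem dist_p00_p10 : dist p00 p10 = 1 := by
  simp [EuclideanSpace.dist_eq, p00, p10]

theorem one_le_dist_p10_p01 : 1 ≤ dist p10 p01 :=
  one_le_dist_p10_of_mem_segment (right_mem_segment ℝ p00 p01)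

def triangleTriples : Set (E2 × E2 × E2) :=
  (segment ℝ p10 p01 ×ˢ ({p10} ×ˢ {p01})) ∪ ({p00} ×ˢ (segment ℝ p00 p01 ×ˢ {p01})) ∪
    ({p00} ×ˢ ({p10} ×ˢ segment ℝ p00 p10))

section TriangleTriples

variable {t : E2 × E2 × E2}

theorem one_eighth_le_of_mem_triangleTriples (ht : t ∈ triangleTriples) :
    1 / 8 ≤ dist p00 t.1 / 2 + dist p10 t.2.1 / 4 + dist p01 t.2.2 / 8 := by
  have := dist_nonneg (x := p00) (y := t.1)
  have := dist_nonneg (x := p10) (y := t.2.1)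
  have := dist_nonneg (x := p01) (y := t.2.2)
  rcases ht with (⟨h, -, -⟩ | ⟨-, h, -⟩) | ⟨-, -, h⟩
  · linarith [half_le_dist_p00_of_mem_segment h]
  · linarith [one_le_dist_p10_of_mem_segment h]
  · linarith [one_le_dist_p01_of_mem_segment h]

theorem snd_eq_p10_or_snd_snd_eq_p01 (ht : t ∈ triangleTriples) :
    t.2.1 = p10 ∨ t.2.2 = p01 := by
  rcases ht with (⟨-, h, -⟩ | ⟨-, -, h⟩) | ⟨-, h, -⟩
  · exact .inl h
  · exact .inr h
  · exact .inl h

theorem fst_eq_p00_or_snd_eq_p10 (ht : t ∈ triangleTriples) :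
    t.1 = p00 ∨ t.2.1 = p10 := by
  rcases ht with (⟨-, h, -⟩ | ⟨h, -, -⟩) | ⟨h, -, -⟩
  · exact .inr h
  · exact .inl h
  · exact .inl h

end TriangleTriples

theorem one_eighth_le_of_eq_p10_or_eq_p01 {a c : E2} (h : a = p10 ∨ c = p01) :
    1 / 8 ≤ dist p00 a / 2 + dist p10 c / 4 := by
  have := dist_nonneg (x := p00) (y := a)
  have := dist_nonneg (x := p10) (y := c)
  rcases h with rfl | rfl
  · linarith [dist_p00_p10]
  · linarith [one_le_dist_p10_p01]

theorem one_eighth_le_of_eq_p00_or_eq_p10 {a c : E2} (h : a = p00 ∨ c = p10) :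
    1 / 8 ≤ dist p10 a / 4 + dist p01 c / 8 := by
  have := dist_nonneg (x := p10) (y := a)
  have := dist_nonneg (x := p01) (y := c)
  rcases h with rfl | rfl
  · linarith [dist_comm p10 p00 ▸ dist_p00_p10]
  · linarith [dist_comm p01 p10 ▸ one_le_dist_p10_p01]

theorem one_eighth_le_window {b : ℕ → E2 × E2 × E2} (hb0 : (b 0).2.1 = p10)
    (hb : ∀ j, b (j + 1) ∈ triangleTriples) {i : ℕ} (hi : 1 ≤ i) :
    1 / 8 ≤ dist p00 (flattenTriples b i) / 2 + dist p10 (flattenTriples b (i + 1)) / 4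
      + dist p01 (flattenTriples b (i + 2)) / 8 := by
  obtain ⟨j, r, hr, rfl⟩ : ∃ j r, r < 3 ∧ i = 3 * j + r :=
    ⟨i / 3, i % 3, Nat.mod_lt _ (by norm_num), (Nat.div_add_mod i 3).symm⟩
  interval_cases r
  · obtain ⟨j, rfl⟩ := Nat.exists_eq_add_one_of_ne_zero (by omega : j ≠ 0)
    simpa using one_eighth_le_of_mem_triangleTriples (hb j)
  · have hbj : (b j).2.1 = p10 ∨ (b j).2.2 = p01 := by
      cases j with
      | zero => exact .inl hb0
      | succ j => exact snd_eq_p10_or_snd_snd_eq_p01 (hb j)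
    have := dist_nonneg (x := p01) (y := flattenTriples b (3 * j + 1 + 2))
    simpa using add_le_add (one_eighth_le_of_eq_p10_or_eq_p01 hbj) (div_nonneg this (by norm_num))
  · rw [show 3 * j + 2 + 1 = 3 * (j + 1) by ring, show 3 * j + 2 + 2 = 3 * (j + 1) + 1 by ring]
    have := dist_nonneg (x := p00) (y := flattenTriples b (3 * j + 2))
    simpa [add_assoc] using
      add_le_add (div_nonneg this two_pos.le)
        (one_eighth_le_of_eq_p00_or_eq_p10 (fst_eq_p00_or_snd_eq_p10 (hb j)))

def initialBlockDist (y : ℕ → E2) : ℝ :=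
  dist p00 (y 0) / 2 + dist p10 (y 1) / 4 + dist p01 (y 2) / 8

theorem continuous_initialBlockDist : Continuous initialBlockDist := by
  unfold initialBlockDist
  fun_prop

theorem triSeq_not_minimal_general
    (A1 A2 A3 : Set E2)
    (hA1s : A1 ⊆ segment ℝ p10 p01)
    (hA2s : A2 ⊆ segment ℝ p00 p01)
    (hA3s : A3 ⊆ segment ℝ p00 p10)
    (v : ℕ → E2 × E2 × E2)
    (hvr : Set.range v =
      (A1 ×ˢ (({p10} : Set E2) ×ˢ ({p01} : Set E2))) ∪
      (({p00} : Set E2) ×ˢ (A2 ×ˢ ({p01} : Set E2))) ∪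
      (({p00} : Set E2) ×ˢ (({p10} : Set E2) ×ˢ A3))) :
    ¬ IsMinimalSeq (triSeq v) ∧
      ∀ i : ℕ, 1 ≤ i →
        (1 : ℝ) / 8 ≤ dist p00 (triSeq v i) / 2 + dist p10 (triSeq v (i + 1)) / 4
          + dist p01 (triSeq v (i + 2)) / 8 := by
  have hv : Set.range v ⊆ triangleTriples := by
    rw [hvr, triangleTriples]
    exact union_subset_union (union_subset_union (prod_mono hA1s subset_rfl)
      (prod_mono subset_rfl (prod_mono hA2s subset_rfl)))
      (prod_mono subset_rfl (prod_mono subset_rfl hA3s))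
  have hwindow : ∀ i : ℕ, 1 ≤ i →
      (1 : ℝ) / 8 ≤ dist p00 (triSeq v i) / 2 + dist p10 (triSeq v (i + 1)) / 4
        + dist p01 (triSeq v (i + 2)) / 8 := fun i hi => by
    rw [triSeq_eq_flattenTriples]
    exact one_eighth_le_window rfl (fun j => hv ⟨padicValNat 2 (j + 1), rfl⟩) hi
  refine ⟨?_, hwindow⟩
  refine not_isMinimalSeq_of_forall_iterate_succ_mem (C := {y | 1 / 8 ≤ initialBlockDist y})
    (isClosed_le continuous_const continuous_initialBlockDist) ?_ fun k => ?_
  · simp [initialBlockDist, triSeq]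
  · simpa only [Set.mem_ofPred_eq, initialBlockDist, shiftSeq_iterate_apply, add_zero]
      using hwindow (k + 1) (by omega)

/-- The sequence `x̄` built from the triangle data is not minimal; in fact the
initial 3-block `((0,0),(1,0),(0,1))` stays at `d̄`-distance at least `1/8`
(where `d̄((u₁,u₂,u₃),(w₁,w₂,w₃)) = ∑ₖ d(uₖ,wₖ)/2ᵏ`, `d` Euclidean) from every
later 3-block.  Here `A₁, A₂, A₃` are countable dense subsets of the segments
`[(1,0),(0,1)]`, `[(0,0),(0,1)]`, `[(0,0),(1,0)]` respectively, and `v` is an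
enumeration of `(A₁×{(1,0)}×{(0,1)}) ∪ ({(0,0)}×A₂×{(0,1)}) ∪ ({(0,0)}×{(1,0)}×A₃)`. -/
theorem triSeq_not_minimal
    (A1 A2 A3 : Set E2)
    (hA1s : A1 ⊆ segment ℝ p10 p01) (hA1c : A1.Countable)
    (hA1d : segment ℝ p10 p01 ⊆ closure A1)
    (hA2s : A2 ⊆ segment ℝ p00 p01) (hA2c : A2.Countable)
    (hA2d : segment ℝ p00 p01 ⊆ closure A2)
    (hA3s : A3 ⊆ segment ℝ p00 p10) (hA3c : A3.Countable)
    (hA3d : segment ℝ p00 p10 ⊆ closure A3)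
    (v : ℕ → E2 × E2 × E2) (hvinj : Function.Injective v)
    (hvr : Set.range v =
      (A1 ×ˢ (({p10} : Set E2) ×ˢ ({p01} : Set E2))) ∪
      (({p00} : Set E2) ×ˢ (A2 ×ˢ ({p01} : Set E2))) ∪
      (({p00} : Set E2) ×ˢ (({p10} : Set E2) ×ˢ A3))) :
    ¬ IsMinimalSeq (triSeq v) ∧
      ∀ i : ℕ, 1 ≤ i →
        (1 : ℝ) / 8 ≤ dist p00 (triSeq v i) / 2 + dist p10 (triSeq v (i + 1)) / 4
          + dist p01 (triSeq v (i + 2)) / 8 :=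
  triSeq_not_minimal_general A1 A2 A3 hA1s hA2s hA3s v hvr

end
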